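/- arXiv:2011.01217 — 5 statements merged into one kernel-verified Lean document; each statement's English description precedes it below -/
import Mathlib

section
/- Let N ≥ 2 and μ ∈ [0,1]^N. Define the set of balanced strategies A_B as the set of pairs (a,b) ∈ [0,1]^N × [0,1]^N with ∑_{i=1}^N (a^i + b^i) = 1 such that there exists c ∈ [0,1] with (1 - a^i - b^i)μ^i + b^i = c for all i. Then A_B is nonempty if and only if inf_{c ∈ [0,1]} ∑_{i=1}^N max((μ^i - c)/μ^i, (c - μ^i)/(1 - μ^i)) ≤ 1, where 0/0 is interpreted as 0. -/
open Set Finset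

theorem balanced_strategies_nonempty_iff (N : ℕ) (hN : 2 ≤ N)
    (μ : Fin N → ℝ) (hμ : ∀ i, μ i ∈ Set.Icc (0:ℝ) 1) :
    (∃ a b : Fin N → ℝ,
      (∀ i, a i ∈ Set.Icc (0:ℝ) 1) ∧ (∀ i, b i ∈ Set.Icc (0:ℝ) 1) ∧
      (∑ i, (a i + b i)) = 1 ∧
      ∃ c ∈ Set.Icc (0:ℝ) 1, ∀ i, (1 - a i - b i) * μ i + b i = c) ↔
    (⨅ c : Set.Icc (0:ℝ) 1, ∑ i, max ((μ i - (c : ℝ)) / μ i) (((c : ℝ) - μ i) / (1 - μ i))) ≤ 1 := by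
  haveI : NeZero N := ⟨by omega⟩
  haveI : Nonempty (Set.Icc (0:ℝ) 1) := ⟨⟨0, by norm_num⟩⟩
  have hterm_nonneg : ∀ c ∈ Set.Icc (0:ℝ) 1, ∀ i : Fin N,
      0 ≤ max ((μ i - c) / μ i) ((c - μ i) / (1 - μ i)) := by
    intro c hc i
    rcases le_total c (μ i) with h | h
    · rcases eq_or_lt_of_le (hμ i).1 with h0 | h0
      · have hc0 : c = 0 := le_antisymm (h.trans h0.symm.le) hc.1
        refine le_max_of_le_right ?_
        simp [hc0, ← h0]
      · exact le_max_of_le_left (div_nonneg (by linarith) h0.le)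
    · rcases eq_or_lt_of_le (hμ i).2 with h1 | h1
      · have hc1 : c = 1 := le_antisymm hc.2 (h1 ▸ h)
        refine le_max_of_le_left ?_
        simp [hc1, h1]
      · exact le_max_of_le_right (div_nonneg (by linarith) (by linarith))
  have hbdd : BddBelow (Set.range fun c : Set.Icc (0:ℝ) 1 =>
      ∑ i, max ((μ i - (c : ℝ)) / μ i) (((c : ℝ) - μ i) / (1 - μ i))) := by
    refine ⟨0, ?_⟩
    rintro x ⟨⟨c, hc⟩, rfl⟩
    exact Finset.sum_nonneg fun i _ => hterm_nonneg c hc i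
  constructor
  · rintro ⟨a, b, ha, hb, hsum, c, hc, hbal⟩
    have key : ∀ i : Fin N, max ((μ i - c) / μ i) ((c - μ i) / (1 - μ i)) ≤ a i + b i := by
      intro i
      have hbi := hbal i
      have h0a := (ha i).1
      have h0b := (hb i).1
      apply max_le
      · rcases eq_or_lt_of_le (hμ i).1 with h0 | h0
        · rw [← h0]
          simp only [div_zero]
          linarith
        · rw [div_le_iff₀ h0]
          nlinarith
      · rcases eq_or_lt_of_le (hμ i).2 with h1 | h1
        · rw [h1]
          simp only [sub_self, div_zero]
          linarith
        · rw [div_le_iff₀ (by linarith : (0:ℝ) < 1 - μ i)]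
          nlinarith
    have hle : (∑ i, max ((μ i - c) / μ i) ((c - μ i) / (1 - μ i))) ≤ 1 := by
      calc (∑ i, max ((μ i - c) / μ i) ((c - μ i) / (1 - μ i)))
          ≤ ∑ i, (a i + b i) := Finset.sum_le_sum fun i _ => key i
        _ = 1 := hsum
    exact le_trans (ciInf_le hbdd ⟨c, hc⟩) hle
  · intro hinf
    set g : ℝ → ℝ := fun c => ∑ i, max ((μ i - c) / μ i) ((c - μ i) / (1 - μ i)) with hgdef
    have hgcont : Continuous g := by
      apply continuous_finset_sum
      intro i _
      exact Continuous.max ((continuous_const.sub continuous_id).div_const _)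
        ((continuous_id.sub continuous_const).div_const _)
    obtain ⟨c0, hc0, hmin⟩ := isCompact_Icc.exists_isMinOn (Set.nonempty_Icc.2 zero_le_one)
      hgcont.continuousOn
    have hmin' : ∀ x ∈ Set.Icc (0:ℝ) 1, g c0 ≤ g x := isMinOn_iff.mp hmin
    have hgc0 : g c0 ≤ 1 := by
      refine le_trans ?_ hinf
      exact le_ciInf fun x => hmin' x x.2
    set m : Fin N → ℝ := fun i => max ((μ i - c0) / μ i) ((c0 - μ i) / (1 - μ i)) with hmdef
    have hm_nonneg : ∀ i, 0 ≤ m i := fun i => hterm_nonneg c0 hc0 i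
    have hmsum : ∑ i, m i ≤ 1 := hgc0
    have hm_le_sum : ∀ i : Fin N, m i ≤ ∑ j, m j := fun i =>
      Finset.single_le_sum (fun j _ => hm_nonneg j) (Finset.mem_univ i)
    set t : Fin N → ℝ := fun i => m i + (if i = 0 then 1 - ∑ j, m j else 0) with htdef
    have ht_ge : ∀ i, m i ≤ t i := by
      intro i
      simp only [htdef]
      split <;> linarith
    have ht_le_one : ∀ i, t i ≤ 1 := by
      intro i
      by_cases h : i = 0
      · subst h
        have ht0 : t 0 = m 0 + (1 - ∑ j, m j) := by simp [htdef]
        rw [ht0]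
        linarith [hm_le_sum (0 : Fin N)]
      · simp only [htdef, if_neg h]
        linarith [hm_le_sum i]
    have ht_nonneg : ∀ i, 0 ≤ t i := fun i => le_trans (hm_nonneg i) (ht_ge i)
    have hts : ∑ i, t i = 1 := by
      simp only [htdef, Finset.sum_add_distrib, Finset.sum_ite_eq', Finset.mem_univ, if_true]
      ring
    have h1 : ∀ i, (1 - t i) * μ i ≤ c0 := by
      intro i
      rcases eq_or_lt_of_le (hμ i).1 with h0 | h0
      · rw [← h0]
        simpa using hc0.1
      · have hle : (μ i - c0) / μ i ≤ t i := le_trans (le_max_left _ _) (ht_ge i)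
        rw [div_le_iff₀ h0] at hle
        nlinarith
    have h2 : ∀ i, c0 - μ i ≤ t i * (1 - μ i) := by
      intro i
      rcases eq_or_lt_of_le (hμ i).2 with h1' | h1'
      · rw [h1']
        nlinarith [hc0.2]
      · have hle : (c0 - μ i) / (1 - μ i) ≤ t i := le_trans (le_max_right _ _) (ht_ge i)
        rw [div_le_iff₀ (by linarith : (0:ℝ) < 1 - μ i)] at hle
        nlinarith
    refine ⟨fun i => t i - (c0 - (1 - t i) * μ i), fun i => c0 - (1 - t i) * μ i,
      ?_, ?_, ?_, c0, hc0, ?_⟩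
    · intro i
      constructor
      · show 0 ≤ t i - (c0 - (1 - t i) * μ i)
        have := h2 i
        nlinarith
      · show t i - (c0 - (1 - t i) * μ i) ≤ 1
        have := h1 i
        have := ht_le_one i
        nlinarith
    · intro i
      constructor
      · show 0 ≤ c0 - (1 - t i) * μ i
        have := h1 i
        linarith
      · show c0 - (1 - t i) * μ i ≤ 1
        have := h2 i
        have := ht_le_one i
        nlinarith
    · have : ∀ i : Fin N, (t i - (c0 - (1 - t i) * μ i)) + (c0 - (1 - t i) * μ i) = t i :=
        fun i => by ring
      rw [Finset.sum_congr rfl fun i _ => this i]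
      exact hts
    · intro i
      ring
end

section
/- Let N ≥ 2 and 0 < μ^i < 1 for all i. Let (a,b) be a balanced strategy with common expected gain c. Let Δ G ∈ {0,1}^N be the vector of realized expert gains, where under the strategy exactly one expert A is corrupted (with joint distribution given by a,b) and each uncorrupted expert i is equal to 1 independently with probability μ^i. Then the N×N matrix M with entries M_{ij} = E[ΔG^i ΔG^j] is positive definite. -/
/-!
Write `dᵢ = μᵢ - c`. By balance, `M = c² 𝟙𝟙ᵀ + (diag(c(1-c) + dᵢ²) - d dᵀ)`, and the first summand
is positive semidefinite. The weighted Cauchy–Schwarz inequality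
`(∑ dᵢxᵢ)² ≤ (∑ⱼ |dⱼ|) ∑ᵢ |dᵢ| xᵢ²` makes the second one positive definite as soon as
`(∑ⱼ |dⱼ|) |dᵢ| < c(1-c) + dᵢ²` for every `i`. Since `|dⱼ| ≤ aⱼ + bⱼ`, the left side is at most
`qᵢ |dᵢ| + dᵢ²` with `qᵢ = 1 - aᵢ - bᵢ`, and `qᵢ |dᵢ| < c(1-c)` because balance reads
`c = μᵢqᵢ + bᵢ`, `1 - c = (1-μᵢ)qᵢ + aᵢ`. As `N ≥ 2`, some `qⱼ > 0`, which forces `0 < c < 1`.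
-/

open Finset Matrix

theorem Matrix.posDef_diagonal_sub_vecMulVec {ι : Type*} [Fintype ι] [DecidableEq ι]
    {w d : ι → ℝ} (h : ∀ i, (∑ j, |d j|) * |d i| < w i) :
    (diagonal w - vecMulVec d d).PosDef := by
  rw [posDef_iff_dotProduct_mulVec]
  refine ⟨(isHermitian_diagonal w).sub (by ext; simp [vecMulVec_apply, mul_comm]), fun x hx ↦ ?_⟩
  have hform : star x ⬝ᵥ ((diagonal w - vecMulVec d d) *ᵥ x) =
      ∑ i, w i * x i ^ 2 - (∑ i, d i * x i) ^ 2 := by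
    rw [sub_mulVec, vecMulVec_mulVec, star_trivial, dotProduct_sub, dotProduct_mulVec]
    simp only [vecMul_diagonal, dotProduct, Pi.smul_apply, op_smul_eq_mul, sq, sum_mul]
    congr 1 <;> exact sum_congr rfl fun i _ ↦ by ring
  have cauchy_schwarz : (∑ i, d i * x i) ^ 2 ≤ ∑ i, (∑ j, |d j|) * |d i| * x i ^ 2 := by
    simp only [mul_assoc, ← mul_sum]
    refine sum_sq_le_sum_mul_sum_of_sq_le_mul _ (fun i _ ↦ abs_nonneg _)
      (fun i _ ↦ by positivity) (fun i _ ↦ ?_)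
    rw [mul_pow, ← sq_abs (d i), sq, mul_assoc]
  obtain ⟨k, hk⟩ : ∃ k, x k ≠ 0 := Function.ne_iff.mp hx
  have hdiag : ∑ i, (∑ j, |d j|) * |d i| * x i ^ 2 < ∑ i, w i * x i ^ 2 :=
    sum_lt_sum (fun i _ ↦ by gcongr; exact (h i).le)
      ⟨k, mem_univ k, mul_lt_mul_of_pos_right (h k) (by positivity)⟩
  linarith

theorem exists_lt_one_of_sum_eq_one {ι : Type*} [Fintype ι] {p : ι → ℝ}
    (hcard : 1 < Fintype.card ι) (h : ∑ i, p i = 1) : ∃ i, p i < 1 := by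
  obtain ⟨i, -, hi⟩ := exists_lt_of_sum_lt (s := univ) (f := p) (g := fun _ ↦ 1)
    (by simpa [h] using hcard)
  exact ⟨i, hi⟩

theorem sum_sub_le_sum_sub_of_le {ι M : Type*} [Fintype ι] [DecidableEq ι] [AddCommGroup M]
    [PartialOrder M] [IsOrderedAddMonoid M] {f g : ι → M} (h : ∀ j, f j ≤ g j) (i : ι) :
    ∑ j, f j - f i ≤ ∑ j, g j - g i := by
  rw [← sum_erase_eq_sub (mem_univ i), ← sum_erase_eq_sub (mem_univ i)]
  exact sum_le_sum fun j _ ↦ h j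

section Balanced

variable {μ a b c : ℝ}

theorem sub_eq_of_balanced (h : (1 - a - b) * μ + b = c) : μ - c = μ * a - (1 - μ) * b := by
  linear_combination h

theorem abs_sub_le_of_balanced (hμ : μ ∈ Set.Icc 0 1) (ha : 0 ≤ a) (hb : 0 ≤ b)
    (h : (1 - a - b) * μ + b = c) : |μ - c| ≤ μ * a + (1 - μ) * b := by
  rw [sub_eq_of_balanced h, abs_le]
  constructor <;> nlinarith [mul_nonneg hμ.1 ha, mul_nonneg (sub_nonneg.2 hμ.2) hb]

theorem abs_sub_le_add_of_balanced (hμ : μ ∈ Set.Icc 0 1) (ha : 0 ≤ a) (hb : 0 ≤ b)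
    (h : (1 - a - b) * μ + b = c) : |μ - c| ≤ a + b := by
  nlinarith [abs_sub_le_of_balanced hμ ha hb h, mul_nonneg hμ.1 hb,
    mul_nonneg (sub_nonneg.2 hμ.2) ha]

theorem mem_Ioo_of_balanced (hμ : μ ∈ Set.Ioo 0 1) (ha : 0 ≤ a) (hb : 0 ≤ b) (hab : a + b < 1)
    (h : (1 - a - b) * μ + b = c) : c ∈ Set.Ioo 0 1 := by
  have hq : 0 < 1 - a - b := by linarith
  constructor <;> nlinarith [mul_pos hμ.1 hq, mul_pos (sub_pos.2 hμ.2) hq]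

theorem mul_abs_sub_lt_of_balanced (hμ : μ ∈ Set.Ioo 0 1) (hc : c ∈ Set.Ioo 0 1) (ha : 0 ≤ a)
    (hb : 0 ≤ b) (h : (1 - a - b) * μ + b = c) : (1 - a - b) * |μ - c| < c * (1 - c) := by
  rcases le_or_gt (1 - a - b) 0 with hq | hq
  · exact (mul_nonpos_of_nonpos_of_nonneg hq (abs_nonneg _)).trans_lt
      (mul_pos hc.1 (sub_pos.2 hc.2))
  have hvar : c * (1 - c) = μ * (1 - μ) * (1 - a - b) ^ 2
      + (1 - a - b) * (μ * a + (1 - μ) * b) + a * b := by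
    rw [← h]; ring
  calc (1 - a - b) * |μ - c| ≤ (1 - a - b) * (μ * a + (1 - μ) * b) :=
        mul_le_mul_of_nonneg_left
          (abs_sub_le_of_balanced (Set.Ioo_subset_Icc_self hμ) ha hb h) hq.le
    _ < c * (1 - c) := by
        rw [hvar]
        nlinarith [mul_nonneg ha hb, mul_pos (mul_pos hμ.1 (sub_pos.2 hμ.2)) (pow_pos hq 2)]

theorem moment_matrix_eq_of_balanced {ι : Type*} [Fintype ι] [DecidableEq ι] {μ a b : ι → ℝ}
    (hbal : ∀ i, (1 - a i - b i) * μ i + b i = c) :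
    (Matrix.of fun i j : ι =>
      if i = j then c
      else (1 - a i - b i - a j - b j) * (μ i * μ j) + b i * μ j + b j * μ i) =
    diagonal (fun i ↦ c * (1 - c) + (μ i - c) ^ 2) - vecMulVec (fun i ↦ μ i - c) (fun i ↦ μ i - c)
      + vecMulVec (fun _ ↦ c) (star fun _ ↦ c) := by
  ext i j
  rcases eq_or_ne i j with rfl | hij
  · simp only [of_apply, if_true, Matrix.add_apply, Matrix.sub_apply, diagonal_apply_eq,
      vecMulVec_apply, star_trivial]
    ring
  · simp only [of_apply, if_neg hij, Matrix.add_apply, Matrix.sub_apply, diagonal_apply_ne _ hij,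
      vecMulVec_apply, star_trivial]
    linear_combination μ j * hbal i + μ i * hbal j

end Balanced

theorem second_moment_matrix_posDef (N : ℕ) (hN : 2 ≤ N)
    (μ a b : Fin N → ℝ) (c : ℝ)
    (hμ : ∀ i, μ i ∈ Set.Ioo (0:ℝ) 1)
    (ha : ∀ i, 0 ≤ a i) (hb : ∀ i, 0 ≤ b i)
    (hsum : (∑ i, (a i + b i)) = 1)
    (hbal : ∀ i, (1 - a i - b i) * μ i + b i = c) :
    (Matrix.of fun i j : Fin N =>
      if i = j then c
      else (1 - a i - b i - a j - b j) * (μ i * μ j) + b i * μ j + b j * μ i).PosDef := by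
  obtain ⟨j, hj⟩ := exists_lt_one_of_sum_eq_one (by rw [Fintype.card_fin]; omega) hsum
  have hc := mem_Ioo_of_balanced (hμ j) (ha j) (hb j) hj (hbal j)
  rw [moment_matrix_eq_of_balanced hbal]
  refine .add_posSemidef (posDef_diagonal_sub_vecMulVec fun i ↦ ?_)
    (posSemidef_vecMulVec_self_star _)
  have hrest := sum_sub_le_sum_sub_of_le
    (fun j ↦ abs_sub_le_add_of_balanced (Set.Ioo_subset_Icc_self (hμ j)) (ha j) (hb j) (hbal j)) i
  rw [hsum] at hrest
  nlinarith [mul_abs_sub_lt_of_balanced (hμ i) hc (ha i) (hb i) (hbal i),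
    abs_nonneg (μ i - c), sq_abs (μ i - c)]
end

section
/- Under a balanced strategy α with common expected gain c_α, for any symmetric N×N matrix S, ∑_{i,j} S_{ij} E^α[ΔG^i ΔG^j] = c_α · Tr(Σ₁ S) − Tr(Σ₂ S), where Σ₁ = (μ^i + μ^j)_{i,j} + diag(1-2μ^1, …, 1-2μ^N) and Σ₂ has entries 𝟙_{i≠j} μ^i μ^j. -/
open Set Finset

theorem balanced_second_moment_trace_identity (N : ℕ) (hN : 2 ≤ N)
    (μ a b : Fin N → ℝ) (c : ℝ)
    (hμ : ∀ i, μ i ∈ Set.Icc (0:ℝ) 1)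
    (ha : ∀ i, a i ∈ Set.Icc (0:ℝ) 1) (hb : ∀ i, b i ∈ Set.Icc (0:ℝ) 1)
    (hsum : (∑ i, (a i + b i)) = 1)
    (hbal : ∀ i, (1 - a i - b i) * μ i + b i = c)
    (S : Matrix (Fin N) (Fin N) ℝ) (hS : S.IsSymm) :
    ∑ i, ∑ j, S i j *
        (if i = j then c
         else (1 - a i - b i - a j - b j) * (μ i * μ j) + b i * μ j + b j * μ i)
      = c * Matrix.trace ((Matrix.of fun i j =>
            (μ i + μ j) + (if i = j then 1 - 2 * μ i else 0)) * S)
        - Matrix.trace ((Matrix.of fun i j =>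
            if i = j then (0:ℝ) else μ i * μ j) * S) := by
  have hS' : ∀ i j, S j i = S i j := fun i j => by
    have := congrFun (congrFun hS j) i
    simpa [Matrix.transpose_apply] using this.symm
  simp only [Matrix.trace, Matrix.diag, Matrix.mul_apply, Matrix.of_apply,
    Finset.mul_sum, ← Finset.sum_sub_distrib]
  refine Finset.sum_congr rfl fun i _ => Finset.sum_congr rfl fun j _ => ?_
  rw [hS' i j]
  by_cases h : i = j
  · subst h; simp; ring
  · have h' : ¬ j = i := fun e => h e.symm
    simp only [if_neg h, if_neg h']
    have h1 := hbal i
    have h2 := hbal j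
    linear_combination S i j * μ j * h1 + S i j * μ i * h2
end

section
/- For N = 2 experts, for every μ ∈ [0,1]^2, the set of balanced strategies is nonempty, i.e., inf_{c∈[0,1]} ∑_{i=1}^2 max((μ^i-c)/μ^i, (c-μ^i)/(1-μ^i)) ≤ 1 (with convention 0/0 = 0). -/
open Set Finset

lemma term_nonneg {μ c : ℝ} (hμ0 : 0 ≤ μ) (hμ1 : μ ≤ 1) :
    0 ≤ max ((μ - c) / μ) ((c - μ) / (1 - μ)) := by
  rcases le_total c μ with h | h
  · exact le_trans (div_nonneg (by linarith) hμ0) (le_max_left _ _)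
  · exact le_trans (div_nonneg (by linarith) (by linarith)) (le_max_right _ _)

lemma term_le_one_left {μ c : ℝ} (hc0 : 0 ≤ c) (hμ1 : μ ≤ 1) (h : c ≤ μ) :
    max ((μ - c) / μ) ((c - μ) / (1 - μ)) ≤ 1 := by
  apply max_le
  · rcases eq_or_lt_of_le (le_trans hc0 h) with h0 | h0
    · simp [← h0]
    · rw [div_le_one h0]; linarith
  · have : (c - μ) / (1 - μ) ≤ 0 :=
      div_nonpos_iff.2 (Or.inr ⟨by linarith, by linarith⟩)
    linarith

lemma term_le_one_right {μ c : ℝ} (hμ0 : 0 ≤ μ) (hc1 : c ≤ 1) (h : μ ≤ c) :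
    max ((μ - c) / μ) ((c - μ) / (1 - μ)) ≤ 1 := by
  apply max_le
  · have : (μ - c) / μ ≤ 0 :=
      div_nonpos_iff.2 (Or.inr ⟨by linarith, hμ0⟩)
    linarith
  · rcases eq_or_lt_of_le (le_trans h hc1) with h0 | h0
    · simp [h0]
    · rw [div_le_one (by linarith)]; linarith

lemma term_self (μ : ℝ) : max ((μ - μ) / μ) ((μ - μ) / (1 - μ)) = 0 := by
  simp

theorem two_experts_balanced_nonempty (μ : Fin 2 → ℝ) (hμ : ∀ i, μ i ∈ Set.Icc (0:ℝ) 1) :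
    (∃ a b : Fin 2 → ℝ,
      (∀ i, a i ∈ Set.Icc (0:ℝ) 1) ∧ (∀ i, b i ∈ Set.Icc (0:ℝ) 1) ∧
      (∑ i, (a i + b i)) = 1 ∧
      (1 - a 0 - b 0) * μ 0 + b 0 = (1 - a 1 - b 1) * μ 1 + b 1) ∧
    (⨅ c : Set.Icc (0:ℝ) 1,
        ∑ i, max ((μ i - (c : ℝ)) / μ i) (((c : ℝ) - μ i) / (1 - μ i))) ≤ 1 := by
  obtain ⟨h00, h01⟩ := hμ 0
  obtain ⟨h10, h11⟩ := hμ 1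
  constructor
  · -- existence of balanced strategies
    rcases eq_or_lt_of_le (by linarith : μ 0 + μ 1 ≤ 2) with hd | hd
    · -- μ 0 = μ 1 = 1
      have e0 : μ 0 = 1 := by linarith
      have e1 : μ 1 = 1 := by linarith
      refine ⟨0, fun _ => 1/2, fun i => ⟨le_refl _, by norm_num⟩,
        fun i => ⟨by norm_num, by norm_num⟩, ?_, ?_⟩
      · norm_num [Fin.sum_univ_two]
      · simp [e0, e1]
    · set d : ℝ := 2 - μ 0 - μ 1 with hdd
      have hdpos : 0 < d := by simp [hdd]; linarith
      set t : ℝ := (1 - μ 0) / d with ht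
      have ht0 : 0 ≤ t := div_nonneg (by linarith) hdpos.le
      have ht1 : t ≤ 1 := by
        rw [ht, div_le_one hdpos]; linarith
      refine ⟨0, ![t, 1 - t], fun i => ⟨le_refl _, by norm_num⟩, ?_, ?_, ?_⟩
      · intro i
        fin_cases i <;> constructor <;> simp <;> linarith
      · simp [Fin.sum_univ_two]
      · simp only [Matrix.cons_val_zero, Matrix.cons_val_one, Matrix.head_cons,
          Pi.zero_apply]
        rw [ht]
        field_simp
        ring
  · -- infimum ≤ 1
    have hbdd : BddBelow (Set.range fun c : Set.Icc (0:ℝ) 1 =>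
        ∑ i, max ((μ i - (c : ℝ)) / μ i) (((c : ℝ) - μ i) / (1 - μ i))) := by
      refine ⟨0, ?_⟩
      rintro x ⟨c, rfl⟩
      exact Finset.sum_nonneg fun i _ => term_nonneg (hμ i).1 (hμ i).2
    have hmem : min (μ 0) (μ 1) ∈ Set.Icc (0:ℝ) 1 :=
      ⟨le_min h00 h10, min_le_of_left_le h01⟩
    refine ciInf_le_of_le hbdd ⟨min (μ 0) (μ 1), hmem⟩ ?_
    rw [Fin.sum_univ_two]
    have hcoe : ((⟨min (μ 0) (μ 1), hmem⟩ : Set.Icc (0:ℝ) 1) : ℝ) = min (μ 0) (μ 1) := rfl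
    rw [hcoe]
    rcases le_total (μ 0) (μ 1) with h | h
    · have e : min (μ 0) (μ 1) = μ 0 := min_eq_left h
      rw [e, term_self]
      have := term_le_one_left (c := μ 0) h00 h11 h
      linarith
    · have e : min (μ 0) (μ 1) = μ 1 := min_eq_right h
      rw [e, term_self]
      have := term_le_one_left (c := μ 1) h10 h01 h
      linarith
end

section
/- Let N ≥ 2, μ^i ∈ (0,1) for all i with μ^i + μ^j ≥ 1 for i ≠ j, and let Σ₁ = (μ^i+μ^j)_{i,j} + diag(1-2μ^1,…,1-2μ^N). Suppose Ψ: ℝ^{N-1} → ℝ is smooth with ∂_i Ψ ≥ 0 for all i and ∑_{i=1}^{N-1} ∂_i Ψ = 1, and let μ^N = max_i μ^i. Then for all x ∈ ℝ^{N-1}: ∑_{i≠j≤N-1} (μ^i+μ^j-1) ∂_iΨ(x) ∂_jΨ(x) ≤ ∑_{i=1}^{N-1} (μ^i+μ^N-1) ∂_iΨ(x). -/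
open Set Finset

theorem gradient_inequality_induction_step (n : ℕ) (hn : 1 ≤ n)
    (μ : Fin (n + 1) → ℝ) (hμ : ∀ i, μ i ∈ Set.Ioo (0:ℝ) 1)
    (hμpair : ∀ i j : Fin (n + 1), i ≠ j → 1 ≤ μ i + μ j)
    (hmax : ∀ i, μ i ≤ μ (Fin.last n))
    (Ψ : (Fin n → ℝ) → ℝ) (hΨ : ContDiff ℝ (⊤ : ℕ∞) Ψ)
    (hpos : ∀ (x : Fin n → ℝ) (i : Fin n), 0 ≤ fderiv ℝ Ψ x (Pi.single i 1))
    (hsum : ∀ x : Fin n → ℝ, ∑ i, fderiv ℝ Ψ x (Pi.single i 1) = 1) :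
    ∀ x : Fin n → ℝ,
      (∑ i, ∑ j, if i ≠ j then
          (μ i.castSucc + μ j.castSucc - 1) *
            fderiv ℝ Ψ x (Pi.single i 1) * fderiv ℝ Ψ x (Pi.single j 1)
        else 0)
      ≤ ∑ i, (μ i.castSucc + μ (Fin.last n) - 1) * fderiv ℝ Ψ x (Pi.single i 1) := by
  intro x
  set g : Fin n → ℝ := fun i => fderiv ℝ Ψ x (Pi.single i 1) with hg
  have hgpos : ∀ i, 0 ≤ g i := fun i => hpos x i
  have hgsum : ∑ i, g i = 1 := hsum x
  apply Finset.sum_le_sum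
  intro i _
  have hne : i.castSucc ≠ Fin.last n := Fin.ne_of_lt (Fin.castSucc_lt_last i)
  have hci : 0 ≤ μ i.castSucc + μ (Fin.last n) - 1 := by
    linarith [hμpair i.castSucc (Fin.last n) hne]
  calc (∑ j, if i ≠ j then (μ i.castSucc + μ j.castSucc - 1) * g i * g j else 0)
      ≤ ∑ j, if i ≠ j then (μ i.castSucc + μ (Fin.last n) - 1) * g i * g j else 0 := by
        apply Finset.sum_le_sum
        intro j _
        split
        · have := hmax j.castSucc
          have := mul_nonneg (hgpos i) (hgpos j)
          nlinarith
        · exact le_refl 0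
    _ = (μ i.castSucc + μ (Fin.last n) - 1) * g i * ∑ j ∈ Finset.univ.erase i, g j := by
        have hfil : Finset.univ.filter (fun j => i ≠ j) = Finset.univ.erase i := by
          ext j; simp [ne_comm]
        rw [Finset.sum_ite, Finset.sum_const_zero, add_zero, hfil, Finset.mul_sum]
    _ ≤ (μ i.castSucc + μ (Fin.last n) - 1) * g i := by
        have h1 : ∑ j ∈ Finset.univ.erase i, g j = 1 - g i := by
          rw [Finset.sum_erase_eq_sub (Finset.mem_univ i), hgsum]
        rw [h1]
        have h2 := mul_nonneg (mul_nonneg hci (hgpos i)) (hgpos i)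
        nlinarith
end
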